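/- Let Γ = (Γ₀, Γ₁, ν, τ) be a connected valued stable translation quiver such that ⟨τ⟩ is an admissible subgroup of the automorphism group of Γ, and let f : Γ₀ → ℕ₀ be a nonzero additive function with f ∘ τ = f. Then f takes only strictly positive values, the function φ : Γ₀/⟨τ⟩ → ℕ₊ given by φ([x]) := f(x) is well defined, and φ is additive on the valued graph (Γ₀/⟨τ⟩, d), i.e. 2φ([y]) = Σ_{[x]} φ([x])·d([x],[y]) for every orbit [y]. -/

import Mathlib

/-- A valued stable translation quiver `(Γ₀, Γ₁, ν, τ)`: the vertex set is `V`, the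
arrow set `Γ₁ ⊆ Γ₀ × Γ₀` is given by the relation `Arrow`, `ν` is a valuation with
`Γ₁ = ν⁻¹(ℕ₊ × ℕ₊)`, the quiver has no loops and is locally finite, and `τ` is a
translation satisfying `ν(τ(b),a) = Δ(ν(a,b))` for all arrows `(a,b)`. -/
structure ValuedStableTranslationQuiver (V : Type*) where
  /-- the arrow relation -/
  Arrow : V → V → Prop
  /-- the valuation -/
  nu : V → V → ℕ × ℕ
  /-- the translation -/
  tau : V ≃ V
  arrow_iff : ∀ x y, Arrow x y ↔ (0 < (nu x y).1 ∧ 0 < (nu x y).2)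
  no_loops : ∀ x, ¬ Arrow x x
  locally_finite : ∀ x, {y | Arrow x y ∨ Arrow y x}.Finite
  tau_arrow : ∀ x y, Arrow (tau x) (tau y) ↔ Arrow x y
  translation : ∀ a y, Arrow y a ↔ Arrow (tau a) y
  valued : ∀ a b, Arrow a b → nu (tau b) a = ((nu a b).2, (nu a b).1)

namespace ValuedStableTranslationQuiver

variable {V : Type*} (Q : ValuedStableTranslationQuiver V)

/-- the set of predecessors of a vertex is finite -/
theorem predsFinite (y : V) : {x | Q.Arrow x y}.Finite :=
  (Q.locally_finite y).subset fun _ hx => Or.inr hx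

/-- the finset of predecessors `y⁻` of a vertex `y` -/
noncomputable def preds (y : V) : Finset V := (Q.predsFinite y).toFinset

/-- a function `f : Γ₀ → ℕ₀` is subadditive if
`f(y) + f(τ(y)) ≥ ∑_{x ∈ y⁻} f(x)·pr₁(ν(x,y))` for all vertices `y` -/
def Subadditive (f : V → ℕ) : Prop :=
  ∀ y, ∑ x ∈ Q.preds y, f x * (Q.nu x y).1 ≤ f y + f (Q.tau y)

/-- a function `f : Γ₀ → ℕ₀` is additive if
`f(y) + f(τ(y)) = ∑_{x ∈ y⁻} f(x)·pr₁(ν(x,y))` for all vertices `y` -/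
def Additive (f : V → ℕ) : Prop :=
  ∀ y, f y + f (Q.tau y) = ∑ x ∈ Q.preds y, f x * (Q.nu x y).1

/-- connectedness of the underlying undirected graph -/
def Connected : Prop :=
  ∀ x y : V, Relation.ReflTransGen (fun a b => Q.Arrow a b ∨ Q.Arrow b a) x y

end ValuedStableTranslationQuiver


namespace ValuedStableTranslationQuiver

variable {V : Type*} (Q : ValuedStableTranslationQuiver V)

/-- the `⟨τ⟩`-orbit equivalence relation on the vertices -/
def tauSetoid : Setoid V where
  r a b := ∃ k : ℤ, (Q.tau ^ k) a = b
  iseqv := by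
    constructor
    · exact fun a => ⟨0, by simp⟩
    · rintro a b ⟨k, rfl⟩
      exact ⟨-k, by rw [← Equiv.Perm.mul_apply, ← zpow_add]; simp⟩
    · rintro a b c ⟨k, rfl⟩ ⟨l, rfl⟩
      exact ⟨l + k, by rw [zpow_add, Equiv.Perm.mul_apply]⟩

/-- `⟨τ⟩` is an admissible subgroup of `Aut(Γ)`. -/
def TauAdmissible : Prop :=
  ∀ x y : V,
    (Set.range (fun k : ℤ => (Q.tau ^ k) x) ∩ ({y} ∪ {z | Q.Arrow y z})).Subsingleton ∧
    (Set.range (fun k : ℤ => (Q.tau ^ k) x) ∩ ({y} ∪ {z | Q.Arrow z y})).Subsingleton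

end ValuedStableTranslationQuiver

namespace ValuedStableTranslationQuiver

variable {V : Type*} (Q : ValuedStableTranslationQuiver V)

open Classical in
/-- The valued-graph structure `d` on the set of `⟨τ⟩`-orbits `Γ₀/⟨τ⟩`:
`d([x],[y]) = pr₁(ν(a,b))` if there are representatives `a ∈ [x]`, `b ∈ [y]` with an
arrow `a → b`, and `d([x],[y]) = 0` otherwise.  (When `⟨τ⟩` is admissible this does not
depend on the choice of representatives.) -/
noncomputable def dOrb : Quotient (tauSetoid Q) → Quotient (tauSetoid Q) → ℕ :=
  fun c c' =>
    if h : ∃ a b : V, Quotient.mk (tauSetoid Q) a = c ∧ Quotient.mk (tauSetoid Q) b = c' ∧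
        Q.Arrow a b
    then (Q.nu h.choose h.choose_spec.choose).1
    else 0

end ValuedStableTranslationQuiver

/-!
Additivity at `y` together with `f (τ y) = f y` reads `2 f(y) = ∑_{x ∈ y⁻} f(x) pr₁ ν(x,y)`.
Hence the zero set of `f` is closed under taking neighbours (successors via `x⁻ = (τ x)⁺`), and
connectedness makes `f` positive as soon as it is nonzero. Admissibility says a vertex has at
most one predecessor in each `τ`-orbit, and `τ` preserves `ν` on arrows, so the predecessors of
`y` are in bijection with the orbits `c` with `d(c,[y]) ≠ 0`, with matching valuations; this
turns the additivity of `f` at `y` into the additivity of `φ` at `[y]`.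
-/

theorem Equiv.Perm.zpow_apply_zpow_apply {α β : Type*} (σ : Equiv.Perm α) {R : α → α → β}
    (h : ∀ a b, R (σ a) (σ b) = R a b) (k : ℤ) (a b : α) :
    R ((σ ^ k) a) ((σ ^ k) b) = R a b := by
  induction k using Int.induction_on generalizing a b with
  | zero => rfl
  | succ n ih => simp only [zpow_add_one, Equiv.Perm.mul_apply, ih, h]
  | pred n ih =>
    simpa only [zpow_sub_one, Equiv.Perm.mul_apply, ih, Equiv.Perm.coe_inv,
      Equiv.apply_symm_apply] using (h (σ⁻¹ a) (σ⁻¹ b)).symm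

namespace ValuedStableTranslationQuiver

variable {V : Type*} (Q : ValuedStableTranslationQuiver V)

lemma nu_tau_tau {a b : V} (h : Q.Arrow a b) : Q.nu (Q.tau a) (Q.tau b) = Q.nu a b := by
  have h' : Q.Arrow (Q.tau b) a := (Q.translation b a).mp h
  simpa [Q.valued a b h] using Q.valued _ _ h'

-- `ν` is `τ`-invariant only on arrows, so it is transported together with the arrow.
lemma arrow_and_nu_tau_tau_iff (a b : V) (v : ℕ × ℕ) :
    (Q.Arrow (Q.tau a) (Q.tau b) ∧ Q.nu (Q.tau a) (Q.tau b) = v) ↔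
      (Q.Arrow a b ∧ Q.nu a b = v) := by
  rw [Q.tau_arrow]
  exact and_congr_right fun h => by rw [Q.nu_tau_tau h]

lemma arrow_zpow_and_nu_zpow {a b : V} (h : Q.Arrow a b) (k : ℤ) :
    Q.Arrow ((Q.tau ^ k) a) ((Q.tau ^ k) b) ∧
      Q.nu ((Q.tau ^ k) a) ((Q.tau ^ k) b) = Q.nu a b := by
  have := Equiv.Perm.zpow_apply_zpow_apply Q.tau
    (R := fun x y => Q.Arrow x y ∧ Q.nu x y = Q.nu a b)
    (fun x y => propext (Q.arrow_and_nu_tau_tau_iff x y _)) k a b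
  exact this ▸ ⟨h, rfl⟩

lemma mem_preds {x y : V} : x ∈ Q.preds y ↔ Q.Arrow x y := by
  simp [preds]

section Additive

variable {Q} {f : V → ℕ}

lemma Additive.eq_zero_of_arrow_of_eq_zero (hadd : Q.Additive f) (htau : ∀ x, f (Q.tau x) = f x)
    {x y : V} (hy : f y = 0) (hxy : Q.Arrow x y) : f x = 0 := by
  have hsum : ∑ z ∈ Q.preds y, f z * (Q.nu z y).1 = 0 := by rw [← hadd y, htau, hy]
  have hterm := Finset.sum_eq_zero_iff.mp hsum x (Q.mem_preds.mpr hxy)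
  exact (mul_eq_zero.mp hterm).resolve_right ((Q.arrow_iff x y).mp hxy).1.ne'

lemma Additive.eq_zero_of_adj_of_eq_zero (hadd : Q.Additive f) (htau : ∀ x, f (Q.tau x) = f x)
    {x y : V} (hy : f y = 0) (hxy : Q.Arrow x y ∨ Q.Arrow y x) : f x = 0 := by
  rcases hxy with hxy | hyx
  · exact hadd.eq_zero_of_arrow_of_eq_zero htau hy hxy
  · rw [← htau]
    exact hadd.eq_zero_of_arrow_of_eq_zero htau hy ((Q.translation x y).mp hyx)

lemma Additive.pos_of_connected (hadd : Q.Additive f) (htau : ∀ x, f (Q.tau x) = f x)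
    (hconn : Q.Connected) (hne : ∃ x, f x ≠ 0) (x : V) : 0 < f x := by
  obtain ⟨x₀, hx₀⟩ := hne
  refine Nat.pos_of_ne_zero ?_
  induction hconn x₀ x with
  | refl => exact hx₀
  | tail _ hadj ih => exact fun h => ih (hadd.eq_zero_of_adj_of_eq_zero htau h hadj)

end Additive

lemma mk_eq_mk_iff {a b : V} :
    Quotient.mk (tauSetoid Q) a = Quotient.mk (tauSetoid Q) b ↔ ∃ k : ℤ, (Q.tau ^ k) a = b :=
  Quotient.eq

lemma eq_of_arrow_of_arrow_of_mk_eq (hadm : Q.TauAdmissible) {x₁ x₂ y : V}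
    (h₁ : Q.Arrow x₁ y) (h₂ : Q.Arrow x₂ y)
    (h : Quotient.mk (tauSetoid Q) x₁ = Quotient.mk (tauSetoid Q) x₂) : x₁ = x₂ :=
  (hadm x₁ y).2 ⟨⟨0, rfl⟩, Or.inr h₁⟩ ⟨(Q.mk_eq_mk_iff.mp h), Or.inr h₂⟩

lemma exists_arrow_of_arrow_of_mk_eq {a b y : V} (hab : Q.Arrow a b)
    (hb : Quotient.mk (tauSetoid Q) b = Quotient.mk (tauSetoid Q) y) :
    ∃ x, Q.Arrow x y ∧ Quotient.mk (tauSetoid Q) x = Quotient.mk (tauSetoid Q) a ∧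
      Q.nu x y = Q.nu a b := by
  obtain ⟨k, rfl⟩ := Q.mk_eq_mk_iff.mp hb
  obtain ⟨harr, hnu⟩ := Q.arrow_zpow_and_nu_zpow hab k
  exact ⟨(Q.tau ^ k) a, harr, Q.mk_eq_mk_iff.mpr ⟨-k, by simp⟩, hnu⟩

lemma dOrb_mk_mk_of_arrow (hadm : Q.TauAdmissible) {x y : V} (hxy : Q.Arrow x y) :
    dOrb Q (Quotient.mk (tauSetoid Q) x) (Quotient.mk (tauSetoid Q) y) = (Q.nu x y).1 := by
  have hex : ∃ a b : V, Quotient.mk (tauSetoid Q) a = Quotient.mk (tauSetoid Q) x ∧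
      Quotient.mk (tauSetoid Q) b = Quotient.mk (tauSetoid Q) y ∧ Q.Arrow a b :=
    ⟨x, y, rfl, rfl, hxy⟩
  rw [dOrb, dif_pos hex]
  obtain ⟨ha, hb, hab⟩ := hex.choose_spec.choose_spec
  obtain ⟨x', hx'y, hx', hnu⟩ := Q.exists_arrow_of_arrow_of_mk_eq hab hb
  rw [← hnu, Q.eq_of_arrow_of_arrow_of_mk_eq hadm hx'y hxy (hx'.trans ha)]

lemma exists_mem_preds_mk_eq_of_dOrb_ne_zero {c : Quotient (tauSetoid Q)} {y : V}
    (hc : dOrb Q c (Quotient.mk (tauSetoid Q) y) ≠ 0) :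
    ∃ x ∈ Q.preds y, Quotient.mk (tauSetoid Q) x = c := by
  by_cases hex : ∃ a b : V, Quotient.mk (tauSetoid Q) a = c ∧
      Quotient.mk (tauSetoid Q) b = Quotient.mk (tauSetoid Q) y ∧ Q.Arrow a b
  · obtain ⟨a, b, rfl, hb, hab⟩ := hex
    obtain ⟨x, hxy, hx, -⟩ := Q.exists_arrow_of_arrow_of_mk_eq hab hb
    exact ⟨x, Q.mem_preds.mpr hxy, hx⟩
  · exact absurd (dif_neg hex) hc

lemma finsum_mul_dOrb_mk (hadm : Q.TauAdmissible) (φ : Quotient (tauSetoid Q) → ℕ) (y : V) :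
    ∑ᶠ c, φ c * dOrb Q c (Quotient.mk (tauSetoid Q) y) =
      ∑ x ∈ Q.preds y, φ (Quotient.mk (tauSetoid Q) x) * (Q.nu x y).1 := by
  classical
  have hsupp : Function.support (fun c => φ c * dOrb Q c (Quotient.mk (tauSetoid Q) y)) ⊆
      (Q.preds y).image (Quotient.mk (tauSetoid Q)) :=
    fun c hc => Finset.mem_image.mpr
      (Q.exists_mem_preds_mk_eq_of_dOrb_ne_zero (right_ne_zero_of_mul hc))
  rw [finsum_eq_sum_of_support_subset _ hsupp, Finset.sum_image fun x hx x' hx' h =>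
    Q.eq_of_arrow_of_arrow_of_mk_eq hadm (Q.mem_preds.mp hx) (Q.mem_preds.mp hx') h]
  exact Finset.sum_congr rfl fun x hx => by rw [Q.dOrb_mk_mk_of_arrow hadm (Q.mem_preds.mp hx)]

end ValuedStableTranslationQuiver

open ValuedStableTranslationQuiver in
/-- Lemma 1.3(2): if `Γ` is connected, `⟨τ⟩` is admissible and `f : Γ₀ → ℕ₀` is a nonzero
additive function with `f ∘ τ = f`, then `f` is strictly positive and there is a
well-defined additive function `φ : Γ₀/⟨τ⟩ → ℕ₊` on the orbit valued graph with
`φ([x]) = f(x)` for every vertex `x`. -/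
theorem statement4 {V : Type*} (Q : ValuedStableTranslationQuiver V)
    (hconn : Q.Connected) (hadm : Q.TauAdmissible)
    (f : V → ℕ) (hadd : Q.Additive f) (htau : ∀ x, f (Q.tau x) = f x)
    (hne : ∃ x, f x ≠ 0) :
    (∀ x, 0 < f x) ∧
    ∃ φ : Quotient (tauSetoid Q) → ℕ,
      (∀ x : V, φ (Quotient.mk (tauSetoid Q) x) = f x) ∧
      ∀ c' : Quotient (tauSetoid Q), 2 * φ c' = ∑ᶠ c : Quotient (tauSetoid Q),
        φ c * dOrb Q c c' := by
  have hconst : ∀ a b, (tauSetoid Q) a b → f a = f b := by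
    rintro a b ⟨k, rfl⟩
    exact (Equiv.Perm.zpow_apply_zpow_apply Q.tau (R := fun a _ => f a)
      (fun a _ => htau a) k a a).symm
  refine ⟨hadd.pos_of_connected htau hconn hne, Quotient.lift f hconst, fun _ => rfl, ?_⟩
  refine Quotient.ind fun y => ?_
  rw [Q.finsum_mul_dOrb_mk hadm]
  change 2 * f y = ∑ x ∈ Q.preds y, f x * (Q.nu x y).1
  rw [← hadd y, htau, two_mul]
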